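/- Consider a spatial spectrum access game with user-specific channel sharing weights on an arbitrary undirected interference graph: player n has transmission gain h_n > 0 and sharing weight w_n > 0, the channel data rates B_m > 0 are common to all users, and player n's payoff under profile a is U_n(a) = h_n·θ_{a_n}·B_{a_n}·w_n/(w_n + Σ_{i ∈ 𝒩_n^{a_n}(a)} w_i), where 𝒩_n^m(a) = {i ∈ 𝒩_n : a_i = m}. Then Φ(a) = −Σ_{n=1}^N (w_n² + (1/2)·Σ_{i ∈ 𝒩_n^{a_n}(a)} w_n w_i) / (θ_{a_n}·B_{a_n}) is an ordinal potential for the game, and consequently the game has a pure Nash equilibrium. -/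

import Mathlib

/-!
Write `T` for the weight of the neighbours of player `n` sharing its channel and `D = θ B` for
the channel quality. Player `n`'s payoff is `h w² / C` with the cost `C = w (w + T) / D`, so a
deviation raises the payoff exactly when it lowers `C`. In `-Φ` every interfering pair `{n, i}`
on a common channel is counted twice with weight `½ wₙ wᵢ / D`, which makes `-Φ` an exact
potential for these costs: a deviation of `n` changes `-Φ` by precisely the change of `n`'s cost.
A maximiser of `Φ` over the finite strategy space is then a pure Nash equilibrium.
-/

open Finset Function

theorem Real.sign_mul_of_pos {c : ℝ} (hc : 0 < c) (x : ℝ) :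
    Real.sign (c * x) = Real.sign x := by
  rcases lt_trichotomy x 0 with hx | rfl | hx
  · rw [Real.sign_of_neg hx, Real.sign_of_neg (mul_neg_of_pos_of_neg hc hx)]
  · rw [mul_zero]
  · rw [Real.sign_of_pos hx, Real.sign_of_pos (mul_pos hc hx)]

theorem Real.sign_div_sub_div_of_pos {c x y : ℝ} (hc : 0 < c) (hx : 0 < x) (hy : 0 < y) :
    Real.sign (c / x - c / y) = Real.sign (y - x) := by
  have : c / x - c / y = c / (x * y) * (y - x) := by field_simp
  rw [this, Real.sign_mul_of_pos (div_pos hc (mul_pos hx hy))]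

theorem Finset.sum_sum_eq_two_mul_sum_of_symm {ι R : Type*} [Fintype ι] [DecidableEq ι]
    [NonAssocSemiring R] (d : ι → ι → R) (hsymm : ∀ i j, d i j = d j i) (n : ι)
    (hoff : ∀ i j, i ≠ n → j ≠ n → d i j = 0) (hdiag : d n n = 0) :
    ∑ i, ∑ j, d i j = 2 * ∑ j, d n j := by
  have hrow : ∀ i, i ≠ n → ∑ j, d i j = d n i := fun i hi => by
    rw [Fintype.sum_eq_single n fun j hj => hoff i j hi hj, hsymm]
  rw [← add_sum_erase _ _ (mem_univ n), sum_congr rfl fun i hi => hrow i (ne_of_mem_erase hi),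
    ← add_sum_erase _ (d n) (mem_univ n), hdiag, zero_add, two_mul]

section Game

variable {ι α : Type*} [DecidableEq ι]

def IsOrdinalPotential (U : (ι → α) → ι → ℝ) (Φ : (ι → α) → ℝ) : Prop :=
  ∀ (n : ι) (a : ι → α) (m : α),
    Real.sign (Φ (update a n m) - Φ a) = Real.sign (U (update a n m) n - U a n)

def IsPureNash (U : (ι → α) → ι → ℝ) (a : ι → α) : Prop :=
  ∀ (n : ι) (m : α), U (update a n m) n ≤ U a n

theorem IsOrdinalPotential.isPureNash_of_isMax {U : (ι → α) → ι → ℝ} {Φ : (ι → α) → ℝ}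
    (hΦ : IsOrdinalPotential U Φ) {a : ι → α} (ha : ∀ b, Φ b ≤ Φ a) : IsPureNash U a := by
  intro n m
  by_contra! hlt
  have hsign := hΦ n a m
  rw [Real.sign_of_pos (sub_pos.2 hlt)] at hsign
  rcases (sub_nonpos.2 (ha (update a n m))).lt_or_eq with hneg | hzero
  · rw [Real.sign_of_neg hneg] at hsign
    norm_num at hsign
  · rw [hzero, Real.sign_zero] at hsign
    norm_num at hsign

theorem IsOrdinalPotential.exists_isPureNash [Finite (ι → α)] [Nonempty α]
    {U : (ι → α) → ι → ℝ} {Φ : (ι → α) → ℝ} (hΦ : IsOrdinalPotential U Φ) :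
    ∃ a, IsPureNash U a :=
  let ⟨a, ha⟩ := Finite.exists_max Φ
  ⟨a, hΦ.isPureNash_of_isMax ha⟩

end Game

namespace SpectrumSharing

variable {ι κ : Type*} [DecidableEq ι] [DecidableEq κ]
  (𝒩 : ι → Finset ι) (w : ι → ℝ) (D : κ → ℝ)

noncomputable section

def neighborLoad (a : ι → κ) (n : ι) (m : κ) : ℝ :=
  ∑ i ∈ (𝒩 n).filter (fun i => a i = m), w i

def cost (a : ι → κ) (n : ι) : ℝ :=
  w n * (w n + neighborLoad 𝒩 w a n (a n)) / D (a n)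

def pairCost (a : ι → κ) (i j : ι) : ℝ :=
  if j ∈ 𝒩 i ∧ a j = a i then w i * w j / D (a i) else 0

def potential [Fintype ι] (a : ι → κ) : ℝ :=
  -∑ n, (w n ^ 2 + (1 / 2) * ∑ i ∈ (𝒩 n).filter (fun i => a i = a n), w n * w i) / D (a n)

end

variable {𝒩 w D}

theorem neighborLoad_update_self (hself : ∀ n, n ∉ 𝒩 n) (a : ι → κ) (n : ι) (m k : κ) :
    neighborLoad 𝒩 w (update a n m) n k = neighborLoad 𝒩 w a n k := by
  refine sum_congr (filter_congr fun i hi => ?_) fun _ _ => rfl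
  rw [update_of_ne (ne_of_mem_of_not_mem hi (hself n))]

theorem pairCost_symm (hsym : ∀ i j, i ∈ 𝒩 j ↔ j ∈ 𝒩 i) (a : ι → κ) (i j : ι) :
    pairCost 𝒩 w D a i j = pairCost 𝒩 w D a j i := by
  unfold pairCost
  by_cases hij : j ∈ 𝒩 i ∧ a j = a i
  · have hji : i ∈ 𝒩 j ∧ a i = a j := ⟨(hsym i j).2 hij.1, hij.2.symm⟩
    rw [if_pos hij, if_pos hji, hij.2, mul_comm]
  · have hji : ¬(i ∈ 𝒩 j ∧ a i = a j) := fun h => hij ⟨(hsym i j).1 h.1, h.2.symm⟩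
    rw [if_neg hij, if_neg hji]

theorem sum_pairCost [Fintype ι] (a : ι → κ) (i : ι) :
    ∑ j, pairCost 𝒩 w D a i j = w i * neighborLoad 𝒩 w a i (a i) / D (a i) := by
  simp only [pairCost, neighborLoad, ← sum_filter, mul_sum, sum_div]
  exact sum_congr (by ext; simp) fun _ _ => rfl

theorem potential_eq [Fintype ι] (a : ι → κ) :
    potential 𝒩 w D a =
      -(∑ n, w n ^ 2 / D (a n) + (1 / 2) * ∑ n, ∑ j, pairCost 𝒩 w D a n j) := by
  simp only [potential, sum_pairCost, neighborLoad, mul_sum, ← sum_add_distrib, add_div, sum_div]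
  refine congrArg _ (sum_congr rfl fun n _ => congrArg _ (sum_congr rfl fun i _ => ?_))
  ring

theorem potential_update_sub [Fintype ι] (hself : ∀ n, n ∉ 𝒩 n)
    (hsym : ∀ i j, i ∈ 𝒩 j ↔ j ∈ 𝒩 i) (a : ι → κ) (n : ι) (m : κ) :
    potential 𝒩 w D (update a n m) - potential 𝒩 w D a =
      cost 𝒩 w D a n - cost 𝒩 w D (update a n m) n := by
  set a' := update a n m
  have ha'n : a' n = m := update_self n m a
  have hload : neighborLoad 𝒩 w a' n = neighborLoad 𝒩 w a n :=
    funext (neighborLoad_update_self hself a n m)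
  have hself_terms : ∑ i, w i ^ 2 / D (a' i) - ∑ i, w i ^ 2 / D (a i) =
      w n ^ 2 / D m - w n ^ 2 / D (a n) := by
    rw [← sum_sub_distrib, Fintype.sum_eq_single n fun i hi => by simp [a', update_of_ne hi], ha'n]
  have hpair_terms : ∑ i, ∑ j, pairCost 𝒩 w D a' i j - ∑ i, ∑ j, pairCost 𝒩 w D a i j =
      2 * (∑ j, pairCost 𝒩 w D a' n j - ∑ j, pairCost 𝒩 w D a n j) := by
    have := sum_sum_eq_two_mul_sum_of_symm
      (fun i j => pairCost 𝒩 w D a' i j - pairCost 𝒩 w D a i j)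
      (fun i j => by rw [pairCost_symm hsym a', pairCost_symm hsym a]) n
      (fun i j hi hj => by simp [pairCost, a', update_of_ne hi, update_of_ne hj])
      (by simp [pairCost, hself])
    simpa only [sum_sub_distrib] using this
  rw [sum_pairCost, sum_pairCost, ha'n, hload] at hpair_terms
  rw [potential_eq, potential_eq, cost, cost, ha'n, hload]
  linear_combination (-1 : ℝ) * hself_terms - (1 / 2 : ℝ) * hpair_terms

theorem isOrdinalPotential_potential [Fintype ι] (hself : ∀ n, n ∉ 𝒩 n)
    (hsym : ∀ i j, i ∈ 𝒩 j ↔ j ∈ 𝒩 i) (hD : ∀ m, 0 < D m) {h : ι → ℝ} (hh : ∀ n, 0 < h n)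
    (hw : ∀ n, 0 < w n) {U : (ι → κ) → ι → ℝ}
    (hU : ∀ a n, U a n = h n * D (a n) * (w n / (w n + neighborLoad 𝒩 w a n (a n)))) :
    IsOrdinalPotential U (potential 𝒩 w D) := by
  have hload_nonneg : ∀ (a : ι → κ) n, 0 ≤ neighborLoad 𝒩 w a n (a n) := fun a n =>
    sum_nonneg fun i _ => (hw i).le
  have hcost_pos : ∀ a n, 0 < cost 𝒩 w D a n := fun a n =>
    div_pos (mul_pos (hw n) (add_pos_of_pos_of_nonneg (hw n) (hload_nonneg a n))) (hD (a n))
  have hU_cost : ∀ a n, U a n = h n * w n ^ 2 / cost 𝒩 w D a n := fun a n => by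
    have := (hw n).trans_le (le_add_of_nonneg_right (hload_nonneg a n))
    have := hD (a n)
    rw [hU, cost]
    field_simp
  intro n a m
  rw [potential_update_sub hself hsym, hU_cost, hU_cost, Real.sign_div_sub_div_of_pos
    (mul_pos (hh n) (pow_pos (hw n) 2)) (hcost_pos _ _) (hcost_pos _ _)]

end SpectrumSharing

/-- Spatial spectrum access game with user-specific channel sharing weights on an
arbitrary undirected interference graph:
`Φ(a) = −Σₙ (wₙ² + (1/2)·Σ_{i∈𝒩ₙ^{aₙ}(a)} wₙ wᵢ)/(θ_{aₙ} B_{aₙ})` is an ordinal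
potential, and the game has a pure Nash equilibrium. -/
theorem stmt_9 (N M : ℕ)
    (𝒩 : Fin (N + 1) → Finset (Fin (N + 1)))
    (hself : ∀ n, n ∉ 𝒩 n)
    -- undirected interference graph:
    (hsym : ∀ i j, i ∈ 𝒩 j ↔ j ∈ 𝒩 i)
    (θ : Fin (M + 1) → ℝ) (hθ : ∀ m, 0 < θ m ∧ θ m < 1)
    (B : Fin (M + 1) → ℝ) (hB : ∀ m, 0 < B m)
    (h : Fin (N + 1) → ℝ) (hh : ∀ n, 0 < h n)
    (w : Fin (N + 1) → ℝ) (hw : ∀ n, 0 < w n)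
    (U : (Fin (N + 1) → Fin (M + 1)) → Fin (N + 1) → ℝ)
    (hU : ∀ a n, U a n = h n * θ (a n) * B (a n) *
      (w n / (w n + ∑ i ∈ (𝒩 n).filter (fun i => a i = a n), w i)))
    (Φ : (Fin (N + 1) → Fin (M + 1)) → ℝ)
    (hΦ : ∀ a, Φ a = -∑ n,
      (w n ^ 2 + (1 / 2) * ∑ i ∈ (𝒩 n).filter (fun i => a i = a n), w n * w i) /
        (θ (a n) * B (a n))) :
    (∀ (n : Fin (N + 1)) (a : Fin (N + 1) → Fin (M + 1)) (m : Fin (M + 1)),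
      Real.sign (Φ (Function.update a n m) - Φ a) =
        Real.sign (U (Function.update a n m) n - U a n)) ∧
    ∃ a : Fin (N + 1) → Fin (M + 1), ∀ (n : Fin (N + 1)) (m : Fin (M + 1)),
      U (Function.update a n m) n ≤ U a n := by
  have hΦ_eq : Φ = SpectrumSharing.potential 𝒩 w (fun m => θ m * B m) := funext hΦ
  have hpot : IsOrdinalPotential U Φ := by
    rw [hΦ_eq]
    exact SpectrumSharing.isOrdinalPotential_potential hself hsym
      (fun m => mul_pos (hθ m).1 (hB m)) hh hw fun a n => by rw [hU, mul_assoc (h n)]; rfl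
  exact ⟨hpot, hpot.exists_isPureNash⟩
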